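/- The relative entropy of measurement-coherence admits the closed form: for any POVM M = {M_x} on ℂ^d, min over incoherent POVMs F of D_m(M‖F) equals (1/d) Σ_x [S(Δ(M_x)) − S(M_x)], and the minimum is attained at F = {Δ(M_x)}. -/

import Mathlib

open Matrix Finset
open Kronecker
open scoped Classical ComplexOrder

variable {ι : Type*} [Fintype ι] [DecidableEq ι]

/-- Matrix logarithm of a Hermitian matrix (0 otherwise), via spectral decomposition. -/
noncomputable def mlog (A : Matrix ι ι ℂ) : Matrix ι ι ℂ :=
  if h : A.IsHermitian then
    (h.eigenvectorUnitary : Matrix ι ι ℂ) *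
      Matrix.diagonal (fun i => (Real.log (h.eigenvalues i) : ℂ)) *
      (star h.eigenvectorUnitary : Matrix ι ι ℂ)
  else 0

/-- von Neumann entropy of a positive semidefinite matrix. -/
noncomputable def vnEnt (A : Matrix ι ι ℂ) : ℝ :=
  -(A * mlog A).trace.re

/-- supp(P) ⊆ supp(Q), as ranges of the associated linear maps. -/
def suppLE (P Q : Matrix ι ι ℂ) : Prop :=
  LinearMap.range (Matrix.toLin' P) ≤ LinearMap.range (Matrix.toLin' Q)

/-- Quantum relative entropy of positive semidefinite matrices, extended-real valued:
`D(P‖Q) = Tr(P log P) - Tr(P log Q)` if `supp P ⊆ supp Q`, and `+∞` otherwise. -/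
noncomputable def relEnt (P Q : Matrix ι ι ℂ) : EReal :=
  if suppLE P Q then (((P * mlog P).trace.re - (P * mlog Q).trace.re : ℝ) : EReal)
  else ⊤

/-- Dephasing channel in the (incoherent) basis indexing the matrix. -/
def deph (ρ : Matrix ι ι ℂ) : Matrix ι ι ℂ :=
  Matrix.diagonal (fun i => ρ i i)

/-- Measurement relative entropy between two `n`-outcome POVMs on a `D`-dimensional space:
`D_m(M‖N) = (1/D) Σ_x D(M_x‖N_x)`. -/
noncomputable def measRelEnt {χ : Type*} [Fintype χ] (D : ℕ) (M N : χ → Matrix ι ι ℂ) : EReal :=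
  (((D : ℝ)⁻¹ : ℝ) : EReal) * ∑ x, relEnt (M x) (N x)


set_option linter.unusedSectionVars false
set_option maxHeartbeats 1000000

section Aux
open Polynomial
open Polynomial

noncomputable def conjAH (U : Matrix ι ι ℂ) (hU : U ∈ Matrix.unitaryGroup ι ℂ) :
    Matrix ι ι ℂ →ₐ[ℝ] Matrix ι ι ℂ where
  toFun A := U * A * star U
  map_one' := by show U * 1 * star U = 1; rw [mul_one]; exact Matrix.mem_unitaryGroup_iff.mp hU
  map_mul' A B := by
    have h : star U * U = 1 := Matrix.mem_unitaryGroup_iff'.mp hU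
    calc U * (A * B) * star U = U * A * (star U * U) * B * star U := by
          rw [h]; noncomm_ring
      _ = U * A * star U * (U * B * star U) := by noncomm_ring
  map_zero' := by simp
  map_add' A B := by noncomm_ring
  commutes' r := by
    have h : U * star U = 1 := Matrix.mem_unitaryGroup_iff.mp hU
    simp only [Algebra.algebraMap_eq_smul_one]
    rw [mul_smul_comm, mul_one, smul_mul_assoc, h]

lemma aeval_conj (p : ℝ[X]) {U : Matrix ι ι ℂ} (hU : U ∈ Matrix.unitaryGroup ι ℂ)
    (D : Matrix ι ι ℂ) :
    aeval (U * D * star U) p = U * aeval D p * star U := by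
  have h := aeval_algHom_apply (conjAH U hU) D p
  simpa [conjAH] using h

lemma aeval_diagonal (p : ℝ[X]) (w : ι → ℂ) :
    aeval (Matrix.diagonal w) p = Matrix.diagonal (fun i => aeval (w i) p) := by
  have h := aeval_algHom_apply (Matrix.diagonalAlgHom (R := ℝ) (n := ι) (α := ℂ)) w p
  have h2 : (Matrix.diagonalAlgHom (R := ℝ) (n := ι) (α := ℂ)) ((aeval w) p) =
      Matrix.diagonal (fun i => aeval (w i) p) := by
    have h3 : (aeval w) p = fun i => aeval (w i) p := by
      funext i
      exact (aeval_algHom_apply (Pi.evalAlgHom ℝ (fun _ : ι => ℂ) i) w p).symm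
    simp only [Matrix.diagonalAlgHom_apply, h3]
  simpa [h2] using h

lemma aeval_coe_real (p : ℝ[X]) (t : ℝ) :
    aeval ((t : ℂ)) p = ((Polynomial.eval t p : ℝ) : ℂ) := by
  rw [show ((t : ℂ)) = algebraMap ℝ ℂ t from rfl, aeval_algebraMap_apply]
  simp

lemma funcalc_unique {A : Matrix ι ι ℂ} (hA : A.IsHermitian) {U : Matrix ι ι ℂ}
    (hU : U ∈ Matrix.unitaryGroup ι ℂ) {μ : ι → ℝ}
    (hdec : A = U * Matrix.diagonal (fun i => (μ i : ℂ)) * star U) (f : ℝ → ℝ) :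
    (hA.eigenvectorUnitary : Matrix ι ι ℂ) *
        Matrix.diagonal (fun i => (f (hA.eigenvalues i) : ℂ)) *
        (star hA.eigenvectorUnitary : Matrix ι ι ℂ) =
      U * Matrix.diagonal (fun i => (f (μ i) : ℂ)) * star U := by
  classical
  set s : Finset ℝ := Finset.image hA.eigenvalues Finset.univ ∪ Finset.image μ Finset.univ with hs
  set p : ℝ[X] := Lagrange.interpolate s id f with hpdef
  have hp : ∀ t ∈ s, Polynomial.eval t p = f t := by
    intro t ht
    exact Lagrange.eval_interpolate_at_node f (Set.injOn_id _) ht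
  have hU0 : (hA.eigenvectorUnitary : Matrix ι ι ℂ) ∈ Matrix.unitaryGroup ι ℂ :=
    hA.eigenvectorUnitary.2
  have hspec : A = (hA.eigenvectorUnitary : Matrix ι ι ℂ) *
      Matrix.diagonal (fun i => (hA.eigenvalues i : ℂ)) *
      (star hA.eigenvectorUnitary : Matrix ι ι ℂ) := hA.spectral_theorem
  have key : ∀ (V : Matrix ι ι ℂ) (hV : V ∈ Matrix.unitaryGroup ι ℂ) (ν : ι → ℝ),
      (∀ i, ν i ∈ s) → A = V * Matrix.diagonal (fun i => (ν i : ℂ)) * star V →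
      aeval A p = V * Matrix.diagonal (fun i => (f (ν i) : ℂ)) * star V := by
    intro V hV ν hν hAV
    rw [hAV, aeval_conj p hV, aeval_diagonal]
    have he : (fun i => aeval ((ν i : ℂ)) p) = fun i => ((f (ν i) : ℂ)) := by
      funext i
      rw [aeval_coe_real, hp _ (hν i)]
    rw [he]
  have h1 := key _ hU0 hA.eigenvalues
    (fun i => Finset.mem_union_left _ (Finset.mem_image_of_mem _ (Finset.mem_univ i))) hspec
  have h2 := key _ hU μ
    (fun i => Finset.mem_union_right _ (Finset.mem_image_of_mem _ (Finset.mem_univ i))) hdec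
  rw [← h1, ← h2]

lemma isHermitian_diag_real (v : ι → ℝ) :
    (Matrix.diagonal (fun i => (v i : ℂ))).IsHermitian := by
  rw [Matrix.IsHermitian, Matrix.diagonal_conjTranspose]
  have : (star fun i => ((v i : ℂ))) = fun i => ((v i : ℂ)) := by
    funext i
    simp [Complex.conj_ofReal]
  rw [this]

lemma mlog_diagonal (v : ι → ℝ) :
    mlog (Matrix.diagonal (fun i => (v i : ℂ))) =
      Matrix.diagonal (fun i => (Real.log (v i) : ℂ)) := by
  rw [mlog, dif_pos (isHermitian_diag_real v)]
  have h := funcalc_unique (isHermitian_diag_real v) (Submonoid.one_mem _)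
    (μ := v) (by simp) Real.log
  rw [h]
  simp

open scoped MatrixOrder in
lemma psd_row_eq_zero {A : Matrix ι ι ℂ} (hA : A.PosSemidef) {i : ι}
    (h : A i i = 0) (j : ι) : A i j = 0 := by
  set sq : Matrix ι ι ℂ := CFC.sqrt A with hsq
  have hs : sq * sq = A := CFC.sqrt_mul_sqrt_self A hA.nonneg
  have hherm : sq.IsHermitian := (CFC.sqrt_nonneg A).posSemidef.1
  have hii : ∑ k, sq i k * sq k i = 0 := by
    rw [← Matrix.mul_apply, hs, h]
  have hrow : ∀ k, sq i k = 0 := by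
    have he : ∀ k, sq k i = star (sq i k) := by
      intro k
      exact (Matrix.IsHermitian.apply hherm k i).symm
    have hii2 : ∑ k, (Complex.normSq (sq i k) : ℂ) = 0 := by
      rw [← hii]
      apply Finset.sum_congr rfl
      intro k _
      rw [he k, Complex.star_def, Complex.mul_conj]
    have h2 : ∑ k, Complex.normSq (sq i k) = 0 := by exact_mod_cast hii2
    intro k
    have := (Finset.sum_eq_zero_iff_of_nonneg
      (fun k _ => Complex.normSq_nonneg _)).mp h2 k (Finset.mem_univ k)
    exact Complex.normSq_eq_zero.mp this
  rw [← hs, Matrix.mul_apply]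
  exact Finset.sum_eq_zero fun k _ => by rw [hrow k, zero_mul]

lemma suppLE_diagonal {A : Matrix ι ι ℂ} {w : ι → ℂ}
    (h : ∀ i, w i = 0 → ∀ j, A i j = 0) : suppLE A (Matrix.diagonal w) := by
  rintro y ⟨x, rfl⟩
  refine ⟨fun i => if w i = 0 then 0 else (A.mulVec x i) / w i, ?_⟩
  rw [Matrix.toLin'_apply, Matrix.toLin'_apply]
  funext i
  rw [Matrix.mulVec_diagonal]
  by_cases hw : w i = 0
  · simp only [hw, if_pos, zero_mul]
    rw [Matrix.mulVec, dotProduct]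
    exact (Finset.sum_eq_zero fun j _ => by rw [h i hw j, zero_mul]).symm
  · rw [if_neg hw, mul_div_cancel₀ _ hw]

lemma diag_ne_zero_of_suppLE {A : Matrix ι ι ℂ} {w : ι → ℂ}
    (h : suppLE A (Matrix.diagonal w)) {i : ι} (hA : A i i ≠ 0) : w i ≠ 0 := by
  intro hw
  have hy : A.mulVec (Pi.single i 1) ∈ LinearMap.range (Matrix.toLin' (Matrix.diagonal w)) :=
    h ⟨Pi.single i 1, Matrix.toLin'_apply _ _⟩
  obtain ⟨x, hx⟩ := hy
  rw [Matrix.toLin'_apply] at hx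
  have := congrFun hx i
  rw [Matrix.mulVec_diagonal, hw, zero_mul, Matrix.mulVec_single] at this
  simp at this
  exact hA this.symm

lemma klein (m f : ℝ) (hm : 0 ≤ m) (hf : 0 ≤ f) (h : m ≠ 0 → f ≠ 0) :
    m - f ≤ m * Real.log m - m * Real.log f := by
  rcases eq_or_lt_of_le hm with hm0 | hm0
  · simp [← hm0]; linarith
  · have hf0 : 0 < f := lt_of_le_of_ne hf (Ne.symm (h hm0.ne'))
    have hlog : Real.log (f / m) ≤ f / m - 1 := Real.log_le_sub_one_of_pos (by positivity)
    rw [Real.log_div hf0.ne' hm0.ne'] at hlog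
    have := mul_le_mul_of_nonneg_left hlog hm
    rw [mul_sub, mul_sub, mul_div_cancel₀ _ hm0.ne', mul_one] at this
    nlinarith

lemma ereal_sum_ne_bot {α : Type*} (s : Finset α) (g : α → EReal)
    (h : ∀ x ∈ s, g x ≠ ⊥) : ∑ x ∈ s, g x ≠ ⊥ := by
  classical
  induction s using Finset.induction_on with
  | empty => simp
  | @insert a t hx ih =>
    rw [Finset.sum_insert hx]
    have h1 := h a (Finset.mem_insert_self a t)
    have h2 := ih fun x hx' => h x (Finset.mem_insert_of_mem hx')
    exact fun hc => by rcases EReal.add_eq_bot_iff.mp hc with h | h; exacts [h1 h, h2 h]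

lemma ereal_sum_eq_top {α : Type*} (s : Finset α) (g : α → EReal)
    (hb : ∀ x ∈ s, g x ≠ ⊥) {x₀ : α} (hx₀ : x₀ ∈ s) (ht : g x₀ = ⊤) :
    ∑ x ∈ s, g x = ⊤ := by
  classical
  rw [← Finset.add_sum_erase _ _ hx₀, ht]
  exact EReal.top_add_of_ne_bot (ereal_sum_ne_bot _ _ fun x hx =>
    hb x (Finset.mem_of_mem_erase hx))

lemma ereal_coe_sum {α : Type*} (s : Finset α) (g : α → ℝ) :
    ((∑ x ∈ s, g x : ℝ) : EReal) = ∑ x ∈ s, (g x : EReal) := by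
  classical
  induction s using Finset.induction_on with
  | empty => simp
  | @insert a t hx ih =>
    rw [Finset.sum_insert hx, Finset.sum_insert hx, ← ih, EReal.coe_add]

lemma trace_mul_diagonal (A : Matrix ι ι ℂ) (w : ι → ℂ) :
    (A * Matrix.diagonal w).trace = ∑ i, A i i * w i := by
  rw [Matrix.trace]
  apply Finset.sum_congr rfl
  intro i _
  rw [Matrix.diag_apply, Matrix.mul_diagonal]

lemma psd_diag_re_nonneg {A : Matrix ι ι ℂ} (hA : A.PosSemidef) (i : ι) :
    0 ≤ (A i i).re := by
  have h := hA.re_dotProduct_nonneg (Pi.single i 1)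
  simpa [Matrix.mulVec_single, dotProduct, Pi.single_apply] using h

lemma herm_diag_eq_re {A : Matrix ι ι ℂ} (hA : A.IsHermitian) (i : ι) :
    A i i = ((A i i).re : ℂ) := by
  have h := hA.apply i i
  rw [Complex.star_def] at h
  exact ((Complex.conj_eq_iff_re).mp h).symm

end Aux

/-- Closed form of the relative entropy of measurement-coherence: the minimum of
`D_m(M‖F)` over incoherent POVMs `F` equals `(1/d) Σ_x [S(Δ(M_x)) − S(M_x)]`, and is
attained at `F = {Δ(M_x)}`. -/
theorem stmt12 {d n : ℕ} (hd : 0 < d)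
    (M : Fin n → Matrix (Fin d) (Fin d) ℂ)
    (hpos : ∀ x, (M x).PosSemidef) (hsum : ∑ x, M x = 1) :
    (∀ F : Fin n → Matrix (Fin d) (Fin d) ℂ,
        (∀ x, (F x).PosSemidef) → (∑ x, F x = 1) → (∀ x, deph (F x) = F x) →
        (((d : ℝ)⁻¹ * ∑ x, (vnEnt (deph (M x)) - vnEnt (M x)) : ℝ) : EReal) ≤
          measRelEnt d M F) ∧
    measRelEnt d M (fun x => deph (M x)) =
      (((d : ℝ)⁻¹ * ∑ x, (vnEnt (deph (M x)) - vnEnt (M x)) : ℝ) : EReal) := by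
  have hdinv : (0:ℝ) < (d:ℝ)⁻¹ := inv_pos.mpr (Nat.cast_pos.mpr hd)
  set m : Fin n → Fin d → ℝ := fun x i => ((M x) i i).re with hm
  have hmc : ∀ x i, (M x) i i = ((m x i : ℝ) : ℂ) := fun x i => herm_diag_eq_re (hpos x).1 i
  have hm0 : ∀ x i, 0 ≤ m x i := fun x i => psd_diag_re_nonneg (hpos x) i
  have hdephM : ∀ x, deph (M x) = Matrix.diagonal (fun i => ((m x i : ℝ) : ℂ)) := by
    intro x
    rw [deph]
    have h : (fun i => M x i i) = fun i => ((m x i : ℝ) : ℂ) := funext fun i => hmc x i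
    rw [h]
  have hmlogdeph : ∀ x, mlog (deph (M x)) =
      Matrix.diagonal (fun i => ((Real.log (m x i) : ℝ) : ℂ)) := by
    intro x; rw [hdephM x, mlog_diagonal]
  set S1 : Fin n → ℝ := fun x => ∑ i, m x i * Real.log (m x i) with hS1
  have htr1 : ∀ x, ((M x) * mlog (deph (M x))).trace = ((S1 x : ℝ) : ℂ) := by
    intro x
    rw [hmlogdeph x, trace_mul_diagonal, hS1]
    push_cast
    exact Finset.sum_congr rfl fun i _ => by rw [hmc x i]
  have htr1' : ∀ x, ((M x) * mlog (deph (M x))).trace.re = S1 x := fun x => by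
    rw [htr1 x, Complex.ofReal_re]
  have hdephtr : ∀ x, (deph (M x) * mlog (deph (M x))).trace = ((S1 x : ℝ) : ℂ) := by
    intro x
    rw [hmlogdeph x, trace_mul_diagonal, hS1]
    push_cast
    apply Finset.sum_congr rfl
    intro i _
    rw [hdephM x, Matrix.diagonal_apply_eq]
  have hvnd : ∀ x, vnEnt (deph (M x)) = -S1 x := by
    intro x
    rw [vnEnt, hdephtr x, Complex.ofReal_re]
  have hsuppM : ∀ x, suppLE (M x) (deph (M x)) := by
    intro x
    rw [deph]
    exact suppLE_diagonal (fun i h0 j => psd_row_eq_zero (hpos x) h0 j)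
  have hrelM : ∀ x, relEnt (M x) (deph (M x)) =
      ((vnEnt (deph (M x)) - vnEnt (M x) : ℝ) : EReal) := by
    intro x
    rw [relEnt, if_pos (hsuppM x)]
    congr 1
    rw [htr1' x, hvnd x, vnEnt]
    ring
  have heq : measRelEnt d M (fun x => deph (M x)) =
      (((d : ℝ)⁻¹ * ∑ x, (vnEnt (deph (M x)) - vnEnt (M x)) : ℝ) : EReal) := by
    rw [measRelEnt]
    have h : ∑ x, relEnt (M x) (deph (M x)) =
        ((∑ x, (vnEnt (deph (M x)) - vnEnt (M x)) : ℝ) : EReal) := by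
      rw [ereal_coe_sum]
      exact Finset.sum_congr rfl fun x _ => hrelM x
    rw [h, ← EReal.coe_mul]
  refine ⟨?_, heq⟩
  intro F hFpos hFsum hFdeph
  set f : Fin n → Fin d → ℝ := fun x i => ((F x) i i).re with hf
  have hfc : ∀ x i, (F x) i i = ((f x i : ℝ) : ℂ) := fun x i => herm_diag_eq_re (hFpos x).1 i
  have hf0 : ∀ x i, 0 ≤ f x i := fun x i => psd_diag_re_nonneg (hFpos x) i
  have hFdiag : ∀ x, F x = Matrix.diagonal (fun i => ((f x i : ℝ) : ℂ)) := by
    intro x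
    conv_lhs => rw [← hFdeph x]
    rw [deph]
    have h : (fun i => F x i i) = fun i => ((f x i : ℝ) : ℂ) := funext fun i => hfc x i
    rw [h]
  by_cases hS : ∀ x, suppLE (M x) (F x)
  · -- all supports contained: real-valued case
    set S2 : Fin n → ℝ := fun x => ∑ i, m x i * Real.log (f x i) with hS2
    have hmlogF : ∀ x, mlog (F x) =
        Matrix.diagonal (fun i => ((Real.log (f x i) : ℝ) : ℂ)) := by
      intro x
      conv_lhs => rw [hFdiag x]
      rw [mlog_diagonal]
    have htr2 : ∀ x, ((M x) * mlog (F x)).trace.re = S2 x := by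
      intro x
      rw [hmlogF x, trace_mul_diagonal]
      have h : ∑ i, (M x) i i * ((Real.log (f x i) : ℝ) : ℂ) = ((S2 x : ℝ) : ℂ) := by
        rw [hS2]
        push_cast
        exact Finset.sum_congr rfl fun i _ => by rw [hmc x i]
      rw [h, Complex.ofReal_re]
    have hrelF : ∀ x, relEnt (M x) (F x) =
        (((M x * mlog (M x)).trace.re - S2 x : ℝ) : EReal) := by
      intro x
      rw [relEnt, if_pos (hS x), htr2 x]
    have hmsum : ∀ i, ∑ x, m x i = 1 := by
      intro i
      have h1 : ∑ x, (M x) i i = 1 := by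
        have h := congrFun (congrFun hsum i) i
        rw [Matrix.sum_apply] at h
        rw [h, Matrix.one_apply_eq]
      have h2 : ((∑ x, m x i : ℝ) : ℂ) = 1 := by
        push_cast
        rw [← h1]
        exact Finset.sum_congr rfl fun x _ => (hmc x i).symm
      exact_mod_cast h2
    have hfsum : ∀ i, ∑ x, f x i = 1 := by
      intro i
      have h1 : ∑ x, (F x) i i = 1 := by
        have h := congrFun (congrFun hFsum i) i
        rw [Matrix.sum_apply] at h
        rw [h, Matrix.one_apply_eq]
      have h2 : ((∑ x, f x i : ℝ) : ℂ) = 1 := by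
        push_cast
        rw [← h1]
        exact Finset.sum_congr rfl fun x _ => (hfc x i).symm
      exact_mod_cast h2
    have hkey : ∑ x, S2 x ≤ ∑ x, S1 x := by
      have hpt : ∀ x i, m x i - f x i ≤
          m x i * Real.log (m x i) - m x i * Real.log (f x i) := by
        intro x i
        apply klein _ _ (hm0 x i) (hf0 x i)
        intro hmne
        have hsupp := hS x
        rw [hFdiag x] at hsupp
        have hMne : (M x) i i ≠ 0 := by
          rw [hmc x i]
          exact_mod_cast hmne
        have hwne := diag_ne_zero_of_suppLE hsupp hMne
        exact fun hfe => hwne (by rw [hfe]; simp)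
      have h0 : (0:ℝ) ≤ ∑ x, (S1 x - S2 x) := by
        have hge : ∑ x, ∑ i, (m x i - f x i) ≤ ∑ x, (S1 x - S2 x) := by
          apply Finset.sum_le_sum
          intro x _
          rw [hS1, hS2, ← Finset.sum_sub_distrib]
          exact Finset.sum_le_sum fun i _ => hpt x i
        have hz : ∑ x, ∑ i, (m x i - f x i) = 0 := by
          rw [Finset.sum_comm]
          apply Finset.sum_eq_zero
          intro i _
          rw [Finset.sum_sub_distrib, hmsum i, hfsum i, sub_self]
        linarith
      rw [Finset.sum_sub_distrib] at h0
      linarith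
    rw [measRelEnt]
    have hsum2 : ∑ x, relEnt (M x) (F x) =
        ((∑ x, ((M x * mlog (M x)).trace.re - S2 x) : ℝ) : EReal) := by
      rw [ereal_coe_sum]
      exact Finset.sum_congr rfl fun x _ => hrelF x
    rw [hsum2, ← EReal.coe_mul, EReal.coe_le_coe_iff]
    apply mul_le_mul_of_nonneg_left _ (le_of_lt hdinv)
    have hterm : ∀ x, vnEnt (deph (M x)) - vnEnt (M x) =
        (M x * mlog (M x)).trace.re - S1 x := by
      intro x
      rw [hvnd x, vnEnt]
      ring
    rw [Finset.sum_congr rfl fun x _ => hterm x]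
    rw [Finset.sum_sub_distrib, Finset.sum_sub_distrib]
    linarith
  · -- some support fails: RHS is ⊤
    push_neg at hS
    obtain ⟨x₀, hx₀⟩ := hS
    have hne : ∀ x ∈ Finset.univ, relEnt (M x) (F x) ≠ (⊥ : EReal) := by
      intro x _
      rw [relEnt]
      split
      · exact EReal.coe_ne_bot _
      · exact fun h => (by simp at h)
    have hsumtop : ∑ x, relEnt (M x) (F x) = ⊤ :=
      ereal_sum_eq_top _ _ hne (Finset.mem_univ x₀) (by rw [relEnt, if_neg hx₀])
    rw [measRelEnt, hsumtop, EReal.coe_mul_top_of_pos hdinv]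
    exact le_top
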